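/- arXiv:2306.10378 — 7 statements merged into one kernel-verified Lean document; each statement's English description precedes it below -/
import Mathlib

section
/- If G = (V, E) is a finite simple graph with minimum degree δ(G) ≥ 2, then every minimal double dominating set of G is a co-secure dominating set of G. -/
/-
If `D` is a double dominating set and `u ∈ D`, then swapping `u` for any neighbour
`v` keeps domination, since every vertex outside `D` still sees a second vertex of `D` other
than `u`. It remains to find a neighbour of `u` outside `D`. Minimality says `D \ {u}` is not
double dominating, witnessed by some `w`. If `w` is adjacent to `u`, then `w ∉ D` is such a
neighbour. Otherwise removing `u` does not change `N(w) ∩ D`, forcing `w = u` and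
`|N(u) ∩ D| < 2 ≤ δ(G)`, so again `u` has a neighbour outside `D`.
-/

/-- `D` is a dominating set of `G`: every vertex outside `D` has a neighbor in `D`. -/
def IsDomSet {V : Type*} (G : SimpleGraph V) (D : Set V) : Prop :=
  ∀ v ∉ D, ∃ u ∈ D, G.Adj u v

/-- `S` is a co-secure dominating set of `G`. -/
def IsCSDS {V : Type*} (G : SimpleGraph V) (S : Set V) : Prop :=
  IsDomSet G S ∧ ∀ u ∈ S, ∃ v, v ∉ S ∧ G.Adj u v ∧ IsDomSet G (S \ {u} ∪ {v})

/-- `D` is a double dominating set of `G`: every vertex outside `D` has at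
least two neighbors in `D`. -/
def IsDoubleDomSet {V : Type*} (G : SimpleGraph V) (D : Set V) : Prop :=
  ∀ v ∉ D, 2 ≤ (G.neighborSet v ∩ D).ncard

namespace IsDoubleDomSet

variable {V : Type*} {G : SimpleGraph V} {D : Set V}

lemma exists_adj_ne (hD : IsDoubleDomSet G D) {v : V} (hv : v ∉ D) (u : V) :
    ∃ y ∈ D, y ≠ u ∧ G.Adj y v := by
  obtain ⟨y, ⟨hyv, hyD⟩, hyu⟩ :=
    Set.exists_ne_of_one_lt_ncard (s := G.neighborSet v ∩ D) (hD v hv) u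
  exact ⟨y, hyD, hyu, hyv.symm⟩

lemma isDomSet (hD : IsDoubleDomSet G D) : IsDomSet G D := fun v hv ↦ by
  obtain ⟨y, hyD, -, hy⟩ := hD.exists_adj_ne hv v
  exact ⟨y, hyD, hy⟩

lemma isDomSet_swap (hD : IsDoubleDomSet G D) {u v : V} (hadj : G.Adj u v) :
    IsDomSet G (D \ {u} ∪ {v}) := by
  intro x hx
  simp only [Set.mem_union, Set.mem_sdiff, Set.mem_singleton_iff, not_or, not_and_or,
    not_not] at hx
  obtain ⟨hxD | rfl, -⟩ := hx
  · obtain ⟨y, hyD, hyu, hy⟩ := hD.exists_adj_ne hxD u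
    exact ⟨y, Or.inl ⟨hyD, hyu⟩, hy⟩
  · exact ⟨v, Or.inr rfl, hadj.symm⟩

end IsDoubleDomSet

lemma SimpleGraph.neighborSet_inter_sdiff_singleton_of_not_adj {V : Type*} {G : SimpleGraph V}
    {u w : V} (h : ¬ G.Adj w u) (D : Set V) :
    G.neighborSet w ∩ (D \ {u}) = G.neighborSet w ∩ D := by
  rw [← Set.inter_sdiff_assoc]
  exact Set.sdiff_singleton_eq_self fun hu ↦ h hu.1

lemma IsDoubleDomSet.exists_adj_notMem_of_minimal {V : Type*} {G : SimpleGraph V}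
    {D : Set V} (hD : IsDoubleDomSet G D) (hδ : ∀ v : V, 2 ≤ (G.neighborSet v).ncard)
    (hmin : ∀ D' ⊂ D, ¬ IsDoubleDomSet G D') {u : V} (hu : u ∈ D) :
    ∃ v ∉ D, G.Adj u v := by
  have hnot := hmin _ (Set.sdiff_singleton_ssubset.mpr hu)
  simp only [IsDoubleDomSet, not_forall, not_le] at hnot
  obtain ⟨w, hw, hlt⟩ := hnot
  by_cases hwu : G.Adj w u
  · exact ⟨w, fun hwD ↦ hw ⟨hwD, hwu.ne⟩, hwu.symm⟩
  rw [G.neighborSet_inter_sdiff_singleton_of_not_adj hwu] at hlt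
  have hwD : w ∈ D := by_contra fun hwD ↦ (hD w hwD).not_gt hlt
  obtain rfl : w = u := by_contra fun hne ↦ hw ⟨hwD, hne⟩
  have hN : ¬ G.neighborSet w ⊆ D := fun hsub ↦ by
    rw [Set.inter_eq_left.mpr hsub] at hlt
    exact (hδ w).not_gt hlt
  obtain ⟨v, hv, hvD⟩ := Set.not_subset.mp hN
  exact ⟨v, hvD, hv⟩

theorem stmt3_general {V : Type*} (G : SimpleGraph V)
    (hδ : ∀ v : V, 2 ≤ (G.neighborSet v).ncard)
    (D : Set V) (hD : IsDoubleDomSet G D)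
    (hmin : ∀ D' ⊂ D, ¬ IsDoubleDomSet G D') :
    IsCSDS G D := by
  refine ⟨hD.isDomSet, fun u hu ↦ ?_⟩
  obtain ⟨v, hvD, huv⟩ := hD.exists_adj_notMem_of_minimal hδ hmin hu
  exact ⟨v, hvD, huv, hD.isDomSet_swap huv⟩

theorem stmt3 {V : Type*} [Fintype V] (G : SimpleGraph V)
    (hδ : ∀ v : V, 2 ≤ (G.neighborSet v).ncard)
    (D : Set V) (hD : IsDoubleDomSet G D)
    (hmin : ∀ D' ⊂ D, ¬ IsDoubleDomSet G D') :
    IsCSDS G D :=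
  stmt3_general G hδ D hD hmin
end

section
/- For every finite simple graph G with minimum degree δ(G) ≥ 2, the co-secure domination number satisfies γ_cs(G) ≤ γ₂(G), where γ₂(G) is the double domination number. -/
/-- The co-secure domination number `γ_cs(G)`. -/
noncomputable def gammaCS {V : Type*} [Fintype V] (G : SimpleGraph V) : ℕ :=
  sInf {n : ℕ | ∃ S : Set V, IsCSDS G S ∧ S.ncard = n}

/-- The double domination number `γ₂(G)`. -/
noncomputable def gamma2 {V : Type*} [Fintype V] (G : SimpleGraph V) : ℕ :=
  sInf {n : ℕ | ∃ D : Set V, IsDoubleDomSet G D ∧ D.ncard = n}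

lemma key {V : Type*} [Fintype V] (G : SimpleGraph V)
    (hδ : ∀ v : V, 2 ≤ (G.neighborSet v).ncard) :
    ∀ n : ℕ, ∀ D : Set V, IsDoubleDomSet G D → D.ncard = n →
      ∃ S : Set V, IsCSDS G S ∧ S.ncard ≤ n := by
  intro n
  induction n using Nat.strong_induction_on with
  | _ n ih =>
    intro D hD hcard
    by_cases hcase : ∃ u ∈ D, G.neighborSet u ⊆ D
    · obtain ⟨u, huD, hNu⟩ := hcase
      -- remove u; D \ {u} is still double dominating
      have hD' : IsDoubleDomSet G (D \ {u}) := by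
        intro v hv
        by_cases hvu : v = u
        · subst hvu
          have heq : G.neighborSet v ∩ (D \ {v}) = G.neighborSet v := by
            apply Set.inter_eq_left.mpr
            intro x hx
            refine ⟨hNu hx, ?_⟩
            intro hxu
            rw [Set.mem_singleton_iff] at hxu
            subst hxu
            exact G.irrefl hx
          rw [heq]; exact hδ v
        · have hvD : v ∉ D := fun h => hv ⟨h, hvu⟩
          have h2 := hD v hvD
          have heq : G.neighborSet v ∩ (D \ {u}) = G.neighborSet v ∩ D := by
            ext x
            simp only [Set.mem_inter_iff, Set.mem_diff, Set.mem_singleton_iff]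
            constructor
            · rintro ⟨h1, h2, _⟩; exact ⟨h1, h2⟩
            · rintro ⟨h1, h2⟩
              refine ⟨h1, h2, fun hxu => ?_⟩
              subst hxu
              exact hvD (hNu (G.adj_symm h1))
          rw [heq]; exact h2
      have hlt : (D \ {u}).ncard < n := by
        rw [← hcard]
        have : (D \ {u}).ncard = D.ncard - 1 := by
          rw [Set.ncard_diff_singleton_of_mem huD]
        rw [this]
        have hpos : 0 < D.ncard := (Set.ncard_pos (Set.toFinite D)).mpr ⟨u, huD⟩
        omega
      obtain ⟨S, hS, hle⟩ := ih _ hlt (D \ {u}) hD' rfl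
      exact ⟨S, hS, hle.trans hlt.le⟩
    · push_neg at hcase
      -- every u ∈ D has a neighbor outside D; D is a CSDS
      have hdom : IsDomSet G D := by
        intro v hv
        have h2 := hD v hv
        have hne : (G.neighborSet v ∩ D).Nonempty :=
          Set.nonempty_of_ncard_ne_zero (by omega)
        obtain ⟨x, hx1, hx2⟩ := hne
        exact ⟨x, hx2, G.adj_symm hx1⟩
      refine ⟨D, ⟨hdom, ?_⟩, le_of_eq hcard⟩
      intro u huD
      obtain ⟨v, hv1, hvD⟩ := Set.not_subset.mp (hcase u huD)
      have hadj : G.Adj u v := hv1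
      refine ⟨v, hvD, hadj, ?_⟩
      intro w hw
      by_cases hwu : w = u
      · subst hwu
        exact ⟨v, Set.mem_union_right _ rfl, G.adj_symm hadj⟩
      · have hwD : w ∉ D := by
          intro hwD
          exact hw (Set.mem_union_left _ ⟨hwD, hwu⟩)
        have h2 := hD w hwD
        have : ∃ x ∈ G.neighborSet w ∩ D, x ≠ u := by
          by_contra h
          push_neg at h
          have hsub : G.neighborSet w ∩ D ⊆ {u} := fun x hx => h x hx
          have := Set.ncard_le_ncard hsub (Set.finite_singleton u)
          rw [Set.ncard_singleton] at this
          omega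
        obtain ⟨x, ⟨hx1, hx2⟩, hxu⟩ := this
        exact ⟨x, Set.mem_union_left _ ⟨hx2, hxu⟩, G.adj_symm hx1⟩

theorem stmt4 {V : Type*} [Fintype V] (G : SimpleGraph V)
    (hδ : ∀ v : V, 2 ≤ (G.neighborSet v).ncard) :
    gammaCS G ≤ gamma2 G := by
  have hne : {n : ℕ | ∃ D : Set V, IsDoubleDomSet G D ∧ D.ncard = n}.Nonempty := by
    refine ⟨(Set.univ : Set V).ncard, Set.univ, ?_, rfl⟩
    intro v hv
    exact absurd (Set.mem_univ v) hv
  obtain ⟨D, hD, hcard⟩ := Nat.sInf_mem hne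
  obtain ⟨S, hS, hle⟩ := key G hδ (gamma2 G) D hD hcard
  calc gammaCS G ≤ S.ncard := Nat.sInf_le ⟨S, hS, rfl⟩
    _ ≤ gamma2 G := hle
end

section
/- For every finite simple graph G with minimum degree δ(G) ≥ 2, the double domination number satisfies γ₂(G) ≤ 2·γ_cs(G), where γ_cs(G) is the co-secure domination number. -/
lemma csds_exists {V : Type*} [Fintype V] (G : SimpleGraph V)
    (hδ : ∀ v : V, 2 ≤ (G.neighborSet v).ncard) :
    ∃ S : Set V, IsCSDS G S := by
  classical
  -- take a maximum-cardinality independent set I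
  set Fam : Set (Set V) := {I : Set V | ∀ a ∈ I, ∀ b ∈ I, ¬ G.Adj a b} with hFam
  have hfin : Fam.Finite := Set.toFinite _
  have hne : Fam.Nonempty := ⟨∅, by simp [hFam]⟩
  obtain ⟨I, hI, hmax⟩ := Set.Finite.exists_maximalFor Set.ncard Fam hfin hne
  have hIfin : I.Finite := Set.toFinite _
  -- every vertex outside I has a neighbor in I
  have hadj : ∀ u ∉ I, ∃ w ∈ I, G.Adj u w := by
    intro u hu
    by_contra h
    push_neg at h
    have hI' : (insert u I) ∈ Fam := by
      intro a ha b hb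
      rcases ha with rfl | ha
      · rcases hb with rfl | hb
        · exact G.loopless.irrefl _
        · exact fun hab => h b hb hab
      · rcases hb with rfl | hb
        · exact fun hab => h a ha hab.symm
        · exact hI a ha b hb
    have hle : I.ncard ≤ (insert u I).ncard := Set.ncard_le_ncard (Set.subset_insert _ _) (Set.toFinite _)
    have := hmax hI' hle
    rw [Set.ncard_insert_of_notMem hu hIfin] at this
    omega
  -- neighbors of members of I lie outside I
  have hnbr : ∀ w ∈ I, ∀ x, G.Adj x w → x ∉ I := by
    intro w hw x hx hxI
    exact hI x hxI w hw hx
  refine ⟨Iᶜ, ?_, ?_⟩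
  · -- dominating
    intro v hv
    simp only [Set.notMem_compl_iff] at hv
    have h2 := hδ v
    have hne' : (G.neighborSet v).Nonempty := by
      rw [← Set.ncard_pos (Set.toFinite _)]; omega
    obtain ⟨w, hw⟩ := hne'
    exact ⟨w, hnbr v hv w (G.adj_symm hw), G.adj_symm hw⟩
  · -- co-secure condition
    intro u hu
    have huI : u ∉ I := hu
    obtain ⟨v, hvI, huv⟩ := hadj u huI
    refine ⟨v, by simpa using hvI, huv, ?_⟩
    intro w hw
    simp only [Set.mem_union, Set.mem_diff, Set.mem_singleton_iff, Set.mem_compl_iff] at hw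
    push_neg at hw
    obtain ⟨hw1, hw2⟩ := hw
    by_cases hwu : w = u
    · subst hwu
      exact ⟨v, Or.inr rfl, huv.symm⟩
    · have hwI : w ∈ I := by
        by_contra hwI
        exact hwu (hw1 hwI)
      -- w ∈ I, w ≠ v : it has ≥ 2 neighbors, all outside I, one of them ≠ u
      have h2 := hδ w
      have : ∃ x ∈ G.neighborSet w, x ≠ u := by
        by_contra h
        push_neg at h
        have hsub : G.neighborSet w ⊆ {u} := fun x hx => h x hx
        have := Set.ncard_le_ncard hsub (Set.toFinite _)
        simp only [Set.ncard_singleton] at this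
        omega
      obtain ⟨x, hx, hxu⟩ := this
      have hxI : x ∉ I := hnbr w hwI x (G.adj_symm hx)
      exact ⟨x, Or.inl ⟨hxI, hxu⟩, G.adj_symm hx⟩

theorem stmt5 {V : Type*} [Fintype V] (G : SimpleGraph V)
    (hδ : ∀ v : V, 2 ≤ (G.neighborSet v).ncard) :
    gamma2 G ≤ 2 * gammaCS G := by
  classical
  obtain ⟨S₀, hS₀⟩ := csds_exists G hδ
  have hne : {n : ℕ | ∃ S : Set V, IsCSDS G S ∧ S.ncard = n}.Nonempty :=
    ⟨S₀.ncard, S₀, hS₀, rfl⟩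
  obtain ⟨S, hS, hScard⟩ := Nat.sInf_mem hne
  choose! f hf1 hf2 hf3 using hS.2
  set D : Set V := S ∪ f '' S with hD
  have hDD : IsDoubleDomSet G D := by
    intro w hw
    have hwS : w ∉ S := fun h => hw (Or.inl h)
    obtain ⟨u, huS, huw⟩ := hS.1 w hwS
    have hwfu : w ≠ f u := by
      intro h; exact hw (Or.inr ⟨u, huS, h.symm⟩)
    have hw' : w ∉ S \ {u} ∪ {f u} := by
      rintro (⟨h1, _⟩ | h1)
      · exact hwS h1
      · exact hwfu h1
    obtain ⟨x, hx, hxw⟩ := hf3 u huS w hw'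
    have hxu : x ≠ u := by
      rcases hx with ⟨_, hx2⟩ | hx2
      · simpa using hx2
      · intro h; rw [h] at hx2; exact hf1 u huS (hx2 ▸ huS)
    have hxD : x ∈ D := by
      rcases hx with ⟨hx1, _⟩ | hx2
      · exact Or.inl hx1
      · exact Or.inr ⟨u, huS, hx2.symm⟩
    have hfinI : (G.neighborSet w ∩ D).Finite := Set.toFinite _
    have h2 : 1 < (G.neighborSet w ∩ D).ncard := by
      rw [Set.one_lt_ncard_iff hfinI]
      exact ⟨u, x, ⟨huw.symm, Or.inl huS⟩, ⟨hxw.symm, hxD⟩, fun h => hxu h.symm⟩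
    omega
  have hcard : D.ncard ≤ 2 * S.ncard := by
    calc D.ncard ≤ S.ncard + (f '' S).ncard := Set.ncard_union_le _ _
    _ ≤ S.ncard + S.ncard := by
        have := Set.ncard_image_le (f := f) (s := S) (Set.toFinite S)
        omega
    _ = 2 * S.ncard := by ring
  have h1 : gamma2 G ≤ D.ncard := Nat.sInf_le ⟨D, hDD, rfl⟩
  have hg : S.ncard = gammaCS G := hScard
  omega
end

section
/- Let G = (V, E) be a finite simple graph without isolated vertices with V = {v_1, …, v_n}, and let G' = (V', E') be the graph with V' = V ∪ {a_1, …, a_n} ∪ {s, t, x, y, w, z} (all new vertices distinct from V and from each other) and E' = E ∪ {a_i v_i : i ∈ [n]} ∪ {v_i s : i ∈ [n]} ∪ {a_i x : i ∈ [n]} ∪ {a_i z : i ∈ [n]} ∪ {st, xy, wz}. Then for every integer k, G has a dominating set of cardinality at most k if and only if G' has a co-secure dominating set of cardinality at most k + 3. -/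
/- The vertex set of the constructed graph `G'` is `V ⊕ V ⊕ Fin 6`, where
`Sum.inl v` is the original vertex `v`, `Sum.inr (Sum.inl v)` is the new
pendant-type vertex `a_v` attached to `v`, and `Sum.inr (Sum.inr i)` encodes
the six new vertices `s = 0`, `t = 1`, `x = 2`, `y = 3`, `w = 4`, `z = 5`. -/

/-- The edges of `G'`:
`E' = E ∪ {a_i v_i} ∪ {v_i s} ∪ {a_i x} ∪ {a_i z} ∪ {st, xy, wz}`. -/
def pebRel {V : Type*} (G : SimpleGraph V) :
    (V ⊕ V ⊕ Fin 6) → (V ⊕ V ⊕ Fin 6) → Prop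
  | Sum.inl u, Sum.inl v => G.Adj u v                      -- original edges of G
  | Sum.inr (Sum.inl a), Sum.inl v => a = v                -- a_i v_i
  | Sum.inl _, Sum.inr (Sum.inr i) => i = 0                -- v_i s
  | Sum.inr (Sum.inl _), Sum.inr (Sum.inr i) => i = 2 ∨ i = 5  -- a_i x and a_i z
  | Sum.inr (Sum.inr i), Sum.inr (Sum.inr j) =>
      (i = 0 ∧ j = 1) ∨ (i = 2 ∧ j = 3) ∨ (i = 4 ∧ j = 5)  -- st, xy, wz
  | _, _ => False

/-- The constructed graph `G'`. -/
def pebGraph {V : Type*} (G : SimpleGraph V) : SimpleGraph (V ⊕ V ⊕ Fin 6) :=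
  SimpleGraph.fromRel (pebRel G)

/-! The vertices `t`, `y`, `w` are leaves hanging at `s`, `x`, `z`, so every dominating set of
`G'` contains a vertex from each of the pairs `{s, t}`, `{x, y}`, `{z, w}`. Given a dominating
set `D` of `G`, the set `D ∪ {s, x, z}` is co-secure: `v ∈ D` is exchanged for `a_v`, and
`s`, `x`, `z` for `t`, `y`, `w`. Conversely, a co-secure dominating set `S` yields a dominating
set `T` of `G'` with `|T| = |S|` and `s ∉ T` (exchange `s` if it lies in `S`). Then `T` has at
least three vertices among the six new ones, and since no vertex of `V` is dominated by `s`, the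
vertices `v` with `v ∈ T` or `a_v ∈ T` dominate `G`. -/

namespace IsCSDS

variable {α : Type*} {H : SimpleGraph α} {S : Set α}

theorem exists_isDomSet_notMem_ncard_eq (hS : IsCSDS H S) (u : α) :
    ∃ T, IsDomSet H T ∧ u ∉ T ∧ T.ncard = S.ncard := by
  by_cases hu : u ∈ S
  · obtain ⟨v, hvS, huv, hdom⟩ := hS.2 u hu
    refine ⟨S \ {u} ∪ {v}, hdom, ?_, ?_⟩
    · simp [huv.ne]
    · rw [Set.union_singleton, Set.ncard_exchange hvS hu]
  · exact ⟨S, hS.1, hu, rfl⟩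

end IsCSDS

namespace IsDomSet

variable {α : Type*} {H : SimpleGraph α} {T : Set α}

theorem mono {T' : Set α} (hT : IsDomSet H T) (hTT' : T ⊆ T') : IsDomSet H T' := by
  intro v hv
  obtain ⟨u, hu, huv⟩ := hT v fun h => hv (hTT' h)
  exact ⟨u, hTT' hu, huv⟩

theorem mem_or_mem_of_forall_adj_eq {p q : α} (hT : IsDomSet H T) (hp : ∀ c, H.Adj c p → c = q) :
    p ∈ T ∨ q ∈ T := by
  by_cases hpT : p ∈ T
  · exact Or.inl hpT
  · obtain ⟨c, hcT, hcp⟩ := hT p hpT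
    exact Or.inr (hp c hcp ▸ hcT)

end IsDomSet

namespace PebGraph

variable {V : Type*} {G : SimpleGraph V}

abbrev s : V ⊕ V ⊕ Fin 6 := .inr (.inr 0)
abbrev t : V ⊕ V ⊕ Fin 6 := .inr (.inr 1)
abbrev x : V ⊕ V ⊕ Fin 6 := .inr (.inr 2)
abbrev y : V ⊕ V ⊕ Fin 6 := .inr (.inr 3)
abbrev w : V ⊕ V ⊕ Fin 6 := .inr (.inr 4)
abbrev z : V ⊕ V ⊕ Fin 6 := .inr (.inr 5)
abbrev a (v : V) : V ⊕ V ⊕ Fin 6 := .inr (.inl v)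

theorem inl_adj_inl {u v : V} (h : G.Adj u v) : (pebGraph G).Adj (.inl u) (.inl v) := by
  simp [pebGraph, pebRel, h, h.ne]

theorem a_adj_inl (v : V) : (pebGraph G).Adj (a v) (.inl v) := by simp [pebGraph, pebRel]
theorem s_adj_inl (v : V) : (pebGraph G).Adj s (.inl v) := by simp [pebGraph, pebRel]
theorem x_adj_a (v : V) : (pebGraph G).Adj x (a v) := by simp [pebGraph, pebRel]
theorem z_adj_a (v : V) : (pebGraph G).Adj z (a v) := by simp [pebGraph, pebRel]
theorem s_adj_t : (pebGraph G).Adj s t := by simp [pebGraph, pebRel]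
theorem x_adj_y : (pebGraph G).Adj x y := by simp [pebGraph, pebRel]
theorem z_adj_w : (pebGraph G).Adj z w := by simp [pebGraph, pebRel]

theorem eq_s_of_adj_t {c : V ⊕ V ⊕ Fin 6} (h : (pebGraph G).Adj c t) : c = s := by
  rcases c with u | u | i <;> try fin_cases i
  all_goals simp [pebGraph, pebRel] at h ⊢

theorem eq_x_of_adj_y {c : V ⊕ V ⊕ Fin 6} (h : (pebGraph G).Adj c y) : c = x := by
  rcases c with u | u | i <;> try fin_cases i
  all_goals simp [pebGraph, pebRel] at h ⊢

theorem eq_z_of_adj_w {c : V ⊕ V ⊕ Fin 6} (h : (pebGraph G).Adj c w) : c = z := by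
  rcases c with u | u | i <;> try fin_cases i
  all_goals simp [pebGraph, pebRel] at h ⊢

theorem adj_inl_cases {c : V ⊕ V ⊕ Fin 6} {v : V} (h : (pebGraph G).Adj c (.inl v)) :
    (∃ u, c = .inl u ∧ G.Adj u v) ∨ c = a v ∨ c = s := by
  rcases c with u | u | i
  · simp only [pebGraph, pebRel, SimpleGraph.fromRel_adj, ne_eq, Sum.inl.injEq] at h
    exact Or.inl ⟨u, rfl, h.2.elim id (·.symm)⟩
  · simpa [pebGraph, pebRel] using h
  · fin_cases i <;> simp [pebGraph, pebRel] at h ⊢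

theorem isDomSet_s_x_z : IsDomSet (pebGraph G) {s, x, z} := by
  rintro (v | v | i) hi
  · exact ⟨s, by simp, s_adj_inl v⟩
  · exact ⟨x, by simp, x_adj_a v⟩
  · fin_cases i
    exacts [by simp at hi, ⟨s, by simp, s_adj_t⟩, by simp at hi, ⟨x, by simp, x_adj_y⟩,
      ⟨z, by simp, z_adj_w⟩, by simp at hi]

theorem isDomSet_s_y_z : IsDomSet (pebGraph G) {s, y, z} := by
  rintro (v | v | i) hi
  · exact ⟨s, by simp, s_adj_inl v⟩
  · exact ⟨z, by simp, z_adj_a v⟩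
  · fin_cases i
    exacts [by simp at hi, ⟨s, by simp, s_adj_t⟩, ⟨y, by simp, x_adj_y.symm⟩, by simp at hi,
      ⟨z, by simp, z_adj_w⟩, by simp at hi]

theorem isDomSet_s_x_w : IsDomSet (pebGraph G) {s, x, w} := by
  rintro (v | v | i) hi
  · exact ⟨s, by simp, s_adj_inl v⟩
  · exact ⟨x, by simp, x_adj_a v⟩
  · fin_cases i
    exacts [by simp at hi, ⟨s, by simp, s_adj_t⟩, by simp at hi, ⟨x, by simp, x_adj_y⟩,
      by simp at hi, ⟨w, by simp, z_adj_w.symm⟩]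

theorem isDomSet_image_inl_union_t_x_z {D : Set V} (hD : IsDomSet G D) :
    IsDomSet (pebGraph G) (Sum.inl '' D ∪ {t, x, z}) := by
  rintro (v | v | i) hi
  · have hv : v ∉ D := fun hv => hi (Or.inl ⟨v, hv, rfl⟩)
    obtain ⟨u, hu, huv⟩ := hD v hv
    exact ⟨.inl u, Or.inl ⟨u, hu, rfl⟩, inl_adj_inl huv⟩
  · exact ⟨x, by simp, x_adj_a v⟩
  · fin_cases i
    exacts [⟨t, by simp, s_adj_t.symm⟩, by simp at hi, by simp at hi, ⟨x, by simp, x_adj_y⟩,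
      ⟨z, by simp, z_adj_w⟩, by simp at hi]

theorem isCSDS_image_inl_union_s_x_z {D : Set V} (hD : IsDomSet G D) :
    IsCSDS (pebGraph G) (Sum.inl '' D ∪ {s, x, z}) := by
  refine ⟨isDomSet_s_x_z.mono Set.subset_union_right, ?_⟩
  rintro u (⟨v, -, rfl⟩ | rfl | rfl | rfl)
  · exact ⟨a v, by simp, (a_adj_inl v).symm,
      isDomSet_s_x_z.mono (by simp [Set.insert_subset_iff])⟩
  · exact ⟨t, by simp, s_adj_t,
      (isDomSet_image_inl_union_t_x_z hD).mono (by simp)⟩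
  · exact ⟨y, by simp, x_adj_y, isDomSet_s_y_z.mono (by simp [Set.insert_subset_iff])⟩
  · exact ⟨w, by simp, z_adj_w, isDomSet_s_x_w.mono (by simp [Set.insert_subset_iff])⟩

theorem ncard_image_inl_union_s_x_z_le (D : Set V) :
    (Sum.inl '' D ∪ {s, x, z}).ncard ≤ D.ncard + 3 :=
  calc _ ≤ (Sum.inl '' D).ncard + ({s, x, z} : Set (V ⊕ V ⊕ Fin 6)).ncard :=
        Set.ncard_union_le _ _
    _ = D.ncard + 3 := by
        rw [Set.ncard_image_of_injective _ Sum.inl_injective,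
          Set.ncard_eq_three.2 ⟨s, x, z, by simp, by simp, by simp, rfl⟩]

def proj (T : Set (V ⊕ V ⊕ Fin 6)) : Set V := {v | .inl v ∈ T ∨ a v ∈ T}

theorem isDomSet_proj {T : Set (V ⊕ V ⊕ Fin 6)} (hT : IsDomSet (pebGraph G) T) (hs : s ∉ T) :
    IsDomSet G (proj T) := by
  intro v hv
  obtain ⟨c, hc, hcv⟩ := hT (.inl v) fun h => hv (Or.inl h)
  rcases adj_inl_cases hcv with ⟨u, rfl, huv⟩ | rfl | rfl
  · exact ⟨u, Or.inl hc, huv⟩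
  · exact absurd (Or.inr hc) hv
  · exact absurd hc hs

theorem ncard_proj_le [Finite V] (T : Set (V ⊕ V ⊕ Fin 6)) :
    (proj T).ncard ≤ (T \ Set.range (Sum.inr ∘ Sum.inr)).ncard := by
  classical
  refine Set.ncard_le_ncard_of_injOn (fun v => if .inl v ∈ T then .inl v else a v) ?_ ?_
  · intro v hv
    split_ifs with h
    · exact ⟨h, by simp⟩
    · exact ⟨hv.resolve_left h, by simp⟩
  · intro u hu v hv huv
    dsimp only at huv
    split_ifs at huv <;> simpa using huv

theorem three_le_ncard_inter_range {T : Set (V ⊕ V ⊕ Fin 6)} (hT : IsDomSet (pebGraph G) T)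
    (hs : s ∉ T) : 3 ≤ (T ∩ Set.range (Sum.inr ∘ Sum.inr)).ncard := by
  have ht : t ∈ T := (hT.mem_or_mem_of_forall_adj_eq fun _ => eq_s_of_adj_t).resolve_right hs
  have hfin := (Set.finite_range (Sum.inr ∘ Sum.inr : Fin 6 → V ⊕ V ⊕ Fin 6)).inter_of_right T
  rcases hT.mem_or_mem_of_forall_adj_eq fun _ => eq_x_of_adj_y with hp | hp <;>
  rcases hT.mem_or_mem_of_forall_adj_eq fun _ => eq_z_of_adj_w with hq | hq <;>
  · exact (Set.two_lt_ncard hfin).2 ⟨t, ⟨ht, by simp⟩, _, ⟨hp, by simp⟩, _, ⟨hq, by simp⟩,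
      by simp, by simp, by simp⟩

theorem ncard_proj_add_three_le [Finite V] {T : Set (V ⊕ V ⊕ Fin 6)}
    (hT : IsDomSet (pebGraph G) T) (hs : s ∉ T) : (proj T).ncard + 3 ≤ T.ncard := by
  rw [← Set.ncard_inter_add_ncard_sdiff_eq_ncard T (Set.range (Sum.inr ∘ Sum.inr))]
  have hgadget := three_le_ncard_inter_range hT hs
  have hrest := ncard_proj_le T
  omega

end PebGraph

theorem stmt8_general {V : Type*} [Fintype V] (G : SimpleGraph V) (k : ℕ) :
    (∃ D : Set V, IsDomSet G D ∧ D.ncard ≤ k) ↔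
    (∃ S : Set (V ⊕ V ⊕ Fin 6), IsCSDS (pebGraph G) S ∧ S.ncard ≤ k + 3) := by
  constructor
  · rintro ⟨D, hD, hDk⟩
    exact ⟨_, PebGraph.isCSDS_image_inl_union_s_x_z hD,
      (PebGraph.ncard_image_inl_union_s_x_z_le D).trans (by omega)⟩
  · rintro ⟨S, hS, hSk⟩
    obtain ⟨T, hT, hsT, hTS⟩ := hS.exists_isDomSet_notMem_ncard_eq PebGraph.s
    have hTcard := PebGraph.ncard_proj_add_three_le hT hsT
    exact ⟨PebGraph.proj T, PebGraph.isDomSet_proj hT hsT, by omega⟩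

theorem stmt8 {V : Type*} [Fintype V] (G : SimpleGraph V)
    (hiso : ∀ v : V, ∃ u : V, G.Adj v u) (k : ℕ) :
    (∃ D : Set V, IsDomSet G D ∧ D.ncard ≤ k) ↔
    (∃ S : Set (V ⊕ V ⊕ Fin 6), IsCSDS (pebGraph G) S ∧ S.ncard ≤ k + 3) :=
  stmt8_general G k
end

section
/- If G is a finite simple 3-regular graph on n vertices, then every co-secure dominating set S of G satisfies |S| ≥ n/4; in particular γ_cs(G) ≥ n/4. -/
lemma dom_bound {V : Type*} [Fintype V] (G : SimpleGraph V)
    (hreg : ∀ v : V, (G.neighborSet v).ncard = 3) (S : Set V)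
    (hS : IsDomSet G S) : Fintype.card V ≤ 4 * S.ncard := by
  classical
  have hnf : ∀ v : V, (G.neighborFinset v).card = 3 := by
    intro v
    have := hreg v
    rwa [Set.ncard_eq_toFinset_card'] at this
  have hsub : Sᶜ.toFinset ⊆ S.toFinset.biUnion (fun u => G.neighborFinset u) := by
    intro x hx
    simp only [Set.mem_toFinset, Set.mem_compl_iff] at hx
    obtain ⟨u, hu, hadj⟩ := hS x hx
    simp only [Finset.mem_biUnion, Set.mem_toFinset, SimpleGraph.mem_neighborFinset]
    exact ⟨u, hu, hadj⟩
  have h1 : Sᶜ.toFinset.card ≤ 3 * S.toFinset.card := by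
    calc Sᶜ.toFinset.card ≤ (S.toFinset.biUnion (fun u => G.neighborFinset u)).card :=
          Finset.card_le_card hsub
      _ ≤ ∑ u ∈ S.toFinset, (G.neighborFinset u).card := Finset.card_biUnion_le
      _ = 3 * S.toFinset.card := by simp [hnf, Finset.sum_const, Nat.mul_comm]
  have h2 : Fintype.card V = S.toFinset.card + Sᶜ.toFinset.card := by
    rw [Set.toFinset_compl]
    exact (Finset.card_add_card_compl S.toFinset).symm
  rw [Set.ncard_eq_toFinset_card']
  omega

lemma exists_csds {V : Type*} [Fintype V] (G : SimpleGraph V)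
    (hreg : ∀ v : V, (G.neighborSet v).ncard = 3) : ∃ S : Set V, IsCSDS G S := by
  classical
  -- a maximal independent set
  set 𝒮 : Finset (Finset V) :=
    Finset.univ.filter (fun I => ∀ a ∈ I, ∀ b ∈ I, ¬ G.Adj a b) with h𝒮
  have hne : 𝒮.Nonempty := ⟨∅, by simp [h𝒮]⟩
  obtain ⟨I, hI𝒮, hImax⟩ : ∃ I ∈ 𝒮, ∀ x ∈ 𝒮, ¬ I < x := by
    obtain ⟨I, hI⟩ := Finset.exists_maximal hne
    exact ⟨I, hI.1, fun x hx hlt => hlt.2 (hI.2 hx hlt.1)⟩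
  have hIind : ∀ a ∈ I, ∀ b ∈ I, ¬ G.Adj a b := by
    simpa [h𝒮] using hI𝒮
  -- maximality: every vertex outside I has a neighbor in I
  have hdomI : ∀ v ∉ I, ∃ u ∈ I, G.Adj u v := by
    intro v hv
    by_contra hcon
    push_neg at hcon
    have hins : insert v I ∈ 𝒮 := by
      simp only [h𝒮, Finset.mem_filter, Finset.mem_univ, true_and]
      intro a ha b hb
      rcases Finset.mem_insert.mp ha with ha' | ha'
      · rcases Finset.mem_insert.mp hb with hb' | hb'
        · rw [ha', hb']; exact G.loopless.irrefl v
        · rw [ha']; intro h; exact hcon b hb' h.symm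
      · rcases Finset.mem_insert.mp hb with hb' | hb'
        · rw [hb']; intro h; exact hcon a ha' h
        · exact hIind a ha' b hb' 
    exact hImax _ hins (Finset.ssubset_insert hv)
  -- every vertex has ≥ 1 neighbor, and ≥ 1 neighbor avoiding any fixed u
  have hnbr : ∀ (x u : V), ∃ y, G.Adj x y ∧ y ≠ u := by
    intro x u
    by_contra hcon
    push_neg at hcon
    have hsub : G.neighborSet x ⊆ {u} := by
      intro y hy; exact hcon y hy
    have := Set.ncard_le_ncard hsub (Set.finite_singleton u)
    simp [hreg x, Set.ncard_singleton] at this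
  refine ⟨(↑I : Set V)ᶜ, ?_, ?_⟩
  · -- dominating
    intro v hv
    simp only [Set.notMem_compl_iff, Finset.mem_coe] at hv
    obtain ⟨y, hxy, -⟩ := hnbr v v
    refine ⟨y, ?_, hxy.symm⟩
    simp only [Set.mem_compl_iff, Finset.mem_coe]
    exact fun hyI => hIind v hv y hyI hxy
  · -- co-secure condition
    intro u hu
    simp only [Set.mem_compl_iff, Finset.mem_coe] at hu
    obtain ⟨v, hvI, hadj⟩ := hdomI u hu
    refine ⟨v, by simpa using hvI, hadj.symm, ?_⟩
    intro x hx
    rw [Set.mem_union] at hx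
    push_neg at hx
    obtain ⟨hx1, hx2⟩ := hx
    by_cases hxu : x = u
    · subst hxu
      exact ⟨v, Or.inr rfl, hadj⟩
    · have hxI : x ∈ I := by
        by_contra h
        exact hx1 ⟨by simpa using h, by simpa using hxu⟩
      obtain ⟨y, hxy, hyu⟩ := hnbr x u
      have hyI : y ∉ I := fun hyI => hIind x hxI y hyI hxy
      refine ⟨y, Or.inl ⟨by simpa using hyI, hyu⟩, hxy.symm⟩

theorem stmt10 {V : Type*} [Fintype V] (G : SimpleGraph V)
    (hreg : ∀ v : V, (G.neighborSet v).ncard = 3) :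
    (∀ S : Set V, IsCSDS G S → (Fintype.card V : ℝ) / 4 ≤ (S.ncard : ℝ)) ∧
    (Fintype.card V : ℝ) / 4 ≤ (gammaCS G : ℝ) := by
  constructor
  · intro S hS
    have h := dom_bound G hreg S hS.1
    rw [div_le_iff₀ (by norm_num : (0:ℝ) < 4)]
    have : (Fintype.card V : ℝ) ≤ 4 * S.ncard := by exact_mod_cast h
    linarith
  · obtain ⟨S, hS⟩ := exists_csds G hreg
    have hne : {n : ℕ | ∃ S : Set V, IsCSDS G S ∧ S.ncard = n}.Nonempty :=
      ⟨S.ncard, S, hS, rfl⟩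
    have hmem := Nat.sInf_mem hne
    obtain ⟨T, hT, hTcard⟩ := hmem
    have h := dom_bound G hreg T hT.1
    rw [div_le_iff₀ (by norm_num : (0:ℝ) < 4)]
    rw [gammaCS, ← hTcard]
    have : (Fintype.card V : ℝ) ≤ 4 * T.ncard := by exact_mod_cast h
    linarith
end

section
/- Every finite simple 3-regular graph G on n vertices has a co-secure dominating set of cardinality at most 2n/3; in particular γ_cs(G) ≤ 2n/3, and hence γ_cs(G) ≤ (8/3)·(n/4), i.e., a minimum co-secure dominating set is within a factor 8/3 of the lower bound n/4. -/
open Finset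

section

variable {V : Type*} {G : SimpleGraph V}

theorem IsDoubleDomSet.isDomSet_s11 {S : Set V} (hS : IsDoubleDomSet G S) : IsDomSet G S := by
  intro v hv
  obtain ⟨u, huN, huS⟩ :=
    Set.nonempty_of_ncard_ne_zero (s := G.neighborSet v ∩ S) (by have := hS v hv; omega)
  exact ⟨u, huS, huN.symm⟩

/-- Swapping `u` for an outside neighbour `v` keeps domination: `u` is dominated by `v`, and
every other outside vertex has a second neighbour in `S` besides `u`. -/
theorem IsDoubleDomSet.isCSDS {S : Set V} (hS : IsDoubleDomSet G S)
    (hout : ∀ u ∈ S, ∃ v ∉ S, G.Adj u v) : IsCSDS G S := by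
  refine ⟨hS.isDomSet_s11, fun u hu => ?_⟩
  obtain ⟨v, hvS, huv⟩ := hout u hu
  refine ⟨v, hvS, huv, fun w hw => ?_⟩
  by_cases hwu : w = u
  · exact ⟨v, Or.inr rfl, hwu ▸ huv.symm⟩
  have hwS : w ∉ S := fun h => hw (Or.inl ⟨h, hwu⟩)
  have hnt : (G.neighborSet w ∩ S).Nontrivial :=
    Set.one_lt_ncard_iff_nontrivial_and_finite.mp (hS w hwS) |>.1
  obtain ⟨x, ⟨hwx, hxS⟩, hxu⟩ := hnt.exists_ne u
  exact ⟨x, Or.inl ⟨hxS, hxu⟩, hwx.symm⟩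

end

namespace SimpleGraph

variable {V : Type*} (G : SimpleGraph V) [DecidableRel G.Adj]

def degIn (A : Finset V) (v : V) : ℕ := #{w ∈ A | G.Adj v w}

def IsDissociationSet (A : Finset V) : Prop := ∀ a ∈ A, G.degIn A a ≤ 1

def IsMaximumDissociationSet (A : Finset V) : Prop :=
  G.IsDissociationSet A ∧ ∀ B, G.IsDissociationSet B → #B ≤ #A

theorem exists_isMaximumDissociationSet [Fintype V] : ∃ A, G.IsMaximumDissociationSet A := by
  classical
  obtain ⟨A, hA, hmax⟩ := exists_max_image {B : Finset V | G.IsDissociationSet B} card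
    ⟨∅, mem_filter.mpr ⟨mem_univ _, fun a ha => absurd ha (notMem_empty a)⟩⟩
  exact ⟨A, (mem_filter.mp hA).2, fun B hB => hmax B (mem_filter.mpr ⟨mem_univ _, hB⟩)⟩

variable [DecidableEq V]

theorem degIn_insert_le (A : Finset V) (s v : V) :
    G.degIn (insert s A) v ≤ G.degIn A v + if G.Adj v s then 1 else 0 := by
  unfold degIn
  rw [filter_insert]
  split_ifs
  · exact card_insert_le _ _
  · simp

theorem degIn_insert_self (A : Finset V) (s : V) : G.degIn (insert s A) s = G.degIn A s := by
  simp [degIn, filter_insert]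

theorem degIn_add_degIn_compl [Fintype V] (A : Finset V) (v : V) :
    G.degIn A v + G.degIn Aᶜ v = G.degree v := by
  rw [← card_neighborFinset_eq_degree, ← card_filter_add_card_filter_not (· ∈ A)]
  congr 1 <;> unfold degIn <;> congr 1 <;> ext w <;> simp [and_comm]

variable {G}

/-- The sum is at most `1` exactly when `s` has at most one neighbour in `A`, and that neighbour
has no neighbour in `A`. -/
theorem IsDissociationSet.insert {A : Finset V} (hA : G.IsDissociationSet A) {s : V}
    (hs : ∑ a ∈ A with G.Adj s a, (1 + G.degIn A a) ≤ 1) :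
    G.IsDissociationSet (insert s A) := by
  have hcard : G.degIn A s ≤ 1 :=
    (card_eq_sum_ones _).trans_le ((sum_le_sum fun _ _ => by omega).trans hs)
  intro a ha
  rcases mem_insert.mp ha with rfl | ha
  · rwa [degIn_insert_self]
  refine (G.degIn_insert_le A s a).trans ?_
  split_ifs with has
  · have hterm : 1 + G.degIn A a ≤ 1 :=
      (single_le_sum (fun _ _ => Nat.zero_le _) (mem_filter.mpr ⟨ha, has.symm⟩)).trans hs
    omega
  · simpa using hA a ha

theorem IsMaximumDissociationSet.two_le_sum {A : Finset V} (hA : G.IsMaximumDissociationSet A)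
    {s : V} (hs : s ∉ A) : 2 ≤ ∑ a ∈ A with G.Adj s a, (1 + G.degIn A a) := by
  by_contra! h
  have := hA.2 _ (hA.1.insert (Nat.le_of_lt_succ h))
  rw [card_insert_of_notMem hs] at this
  omega

theorem IsMaximumDissociationSet.exists_adj {A : Finset V} (hA : G.IsMaximumDissociationSet A)
    {s : V} (hs : s ∉ A) : ∃ a ∈ A, G.Adj s a := by
  obtain ⟨a, ha⟩ := nonempty_of_sum_ne_zero (zero_lt_two.trans_le (hA.two_le_sum hs)).ne'
  exact ⟨a, mem_filter.mp ha⟩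

variable [Fintype V]

theorem IsDissociationSet.isDoubleDomSet_compl {A : Finset V} (hA : G.IsDissociationSet A)
    (hdeg : ∀ v, 3 ≤ G.degree v) : IsDoubleDomSet G (↑A)ᶜ := by
  intro a ha
  have hout : G.neighborSet a ∩ (↑A)ᶜ = ↑({w ∈ Aᶜ | G.Adj a w}) := by
    ext; simp [and_comm]
  rw [hout, Set.ncard_coe_finset]
  change 2 ≤ G.degIn Aᶜ a
  have := G.degIn_add_degIn_compl A a
  have := hA a (by simpa using ha)
  have := hdeg a
  omega

/-- Weight each edge between `A` and `Aᶜ` by one plus the degree inside `A` of its endpoint in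
`A`: by maximality every vertex outside `A` collects weight at least `2`, while a vertex of `A`
with `d` neighbours in `A` sends out at most `(1 + d) (3 - d) ≤ 4`. -/
theorem IsMaximumDissociationSet.card_compl_le {A : Finset V} (hA : G.IsMaximumDissociationSet A)
    (hdeg : ∀ v, G.degree v ≤ 3) : #Aᶜ ≤ 2 * #A := by
  have hweight : ∀ a ∈ A, (1 + G.degIn A a) * G.degIn Aᶜ a ≤ 4 := fun a _ => by
    have hsum := G.degIn_add_degIn_compl A a
    have := hdeg a
    have hd : G.degIn A a ≤ 3 := by omega
    generalize G.degIn A a = d at hsum hd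
    interval_cases d <;> omega
  have key : 2 * #Aᶜ ≤ 4 * #A := calc
    2 * #Aᶜ = ∑ _s ∈ Aᶜ, 2 := by rw [sum_const, smul_eq_mul, mul_comm]
    _ ≤ ∑ s ∈ Aᶜ, ∑ a ∈ A with G.Adj s a, (1 + G.degIn A a) :=
      sum_le_sum fun s hs => hA.two_le_sum (mem_compl.mp hs)
    _ = ∑ a ∈ A, (1 + G.degIn A a) * G.degIn Aᶜ a := by
      rw [sum_comm' (t' := A) (s' := fun a => {s ∈ Aᶜ | G.Adj a s}) (fun s a => by
        simp only [mem_filter, mem_compl, G.adj_comm]; tauto)]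
      simp only [sum_const, smul_eq_mul, degIn, mul_comm]
    _ ≤ ∑ _a ∈ A, 4 := sum_le_sum hweight
    _ = 4 * #A := by rw [sum_const, smul_eq_mul, mul_comm]
  omega

end SimpleGraph

open SimpleGraph in
theorem stmt11 {V : Type*} [Fintype V] (G : SimpleGraph V)
    (hreg : ∀ v : V, (G.neighborSet v).ncard = 3) :
    (∃ S : Set V, IsCSDS G S ∧ (S.ncard : ℝ) ≤ 2 * (Fintype.card V : ℝ) / 3) ∧
    (gammaCS G : ℝ) ≤ 2 * (Fintype.card V : ℝ) / 3 ∧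
    (gammaCS G : ℝ) ≤ (8 / 3) * ((Fintype.card V : ℝ) / 4) := by
  classical
  have hdeg (v : V) : G.degree v = 3 := by
    rw [← card_neighborSet_eq_degree, ← Nat.card_eq_fintype_card, Nat.card_coe_set_eq, hreg]
  obtain ⟨A, hA⟩ := G.exists_isMaximumDissociationSet
  have hCS : IsCSDS G (↑A)ᶜ := (hA.1.isDoubleDomSet_compl fun v => (hdeg v).ge).isCSDS
    fun u hu => by simpa using hA.exists_adj (by simpa using hu)
  have hcard : ((↑A)ᶜ : Set V).ncard = #Aᶜ := by rw [← coe_compl, Set.ncard_coe_finset]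
  have hsmall : 3 * #Aᶜ ≤ 2 * Fintype.card V := by
    have := hA.card_compl_le fun v => (hdeg v).le
    have := card_compl_add_card A
    omega
  have hbound : (((↑A)ᶜ : Set V).ncard : ℝ) ≤ 2 * (Fintype.card V : ℝ) / 3 := by
    rw [hcard, le_div_iff₀ three_pos]
    exact_mod_cast (mul_comm _ _).trans_le hsmall
  have hgamma : (gammaCS G : ℝ) ≤ 2 * (Fintype.card V : ℝ) / 3 :=
    (Nat.cast_le.mpr (Nat.sInf_le ⟨_, hCS, rfl⟩ : gammaCS G ≤ _)).trans hbound
  exact ⟨⟨_, hCS, hbound⟩, hgamma, by linarith⟩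
end

section
/- Let G = (V, E) be a finite simple 3-regular graph and let S ⊆ V be a minimal co-secure dominating set of G. Then there exists a double dominating set S' of G with S ⊆ S' and |S'| ≤ 2|S|. -/
/-!
Choose for every `u ∈ S` a neighbour `f u ∉ S` with `S - u + f u` dominating, and put
`S' = S ∪ f(S)`. A vertex `w ∉ S'` has a neighbour `u ∈ S`; since `w ≠ f u`, the swapped set
`S - u + f u` gives `w` a second neighbour, which lies in `S'` and differs from `u`.
-/

section

open Set

variable {V : Type*} {G : SimpleGraph V}

theorem IsDomSet.isDoubleDomSet_union_image [G.LocallyFinite] {S : Set V} {f : V → V}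
    (hdom : IsDomSet G S) (hf : ∀ u ∈ S, f u ≠ u ∧ IsDomSet G (S \ {u} ∪ {f u})) :
    IsDoubleDomSet G (S ∪ f '' S) := by
  intro w hw
  have hwS : w ∉ S := fun h => hw (Or.inl h)
  obtain ⟨u, hu, huw⟩ := hdom w hwS
  obtain ⟨hfu, hswap⟩ := hf u hu
  have hw' : w ∉ S \ {u} ∪ {f u} := by
    rintro (⟨hwS', -⟩ | rfl)
    · exact hwS hwS'
    · exact hw (Or.inr ⟨u, hu, rfl⟩)
  obtain ⟨x, hx, hxw⟩ := hswap w hw'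
  have hxu : x ≠ u := by
    rintro rfl
    rcases hx with ⟨-, hxx⟩ | hxf
    · exact hxx rfl
    · exact hfu hxf.symm
  have hxT : x ∈ S ∪ f '' S := by
    rcases hx with ⟨hxS, -⟩ | rfl
    · exact Or.inl hxS
    · exact Or.inr ⟨u, hu, rfl⟩
  calc 2 = ({u, x} : Set V).ncard := (ncard_pair hxu.symm).symm
    _ ≤ (G.neighborSet w ∩ (S ∪ f '' S)).ncard :=
      ncard_le_ncard (pair_subset ⟨huw.symm, Or.inl hu⟩ ⟨hxw.symm, hxT⟩)
        ((G.neighborSet w).toFinite.inter_of_left _)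

theorem IsCSDS.exists_isDoubleDomSet_superset [G.LocallyFinite] {S : Set V} (hS : IsCSDS G S)
    (hfin : S.Finite) : ∃ T : Set V, IsDoubleDomSet G T ∧ S ⊆ T ∧ T.ncard ≤ 2 * S.ncard := by
  choose! f hf using hS.2
  refine ⟨S ∪ f '' S, hS.1.isDoubleDomSet_union_image fun u hu =>
    ⟨(hf u hu).2.1.ne', (hf u hu).2.2⟩, subset_union_left, ?_⟩
  calc (S ∪ f '' S).ncard ≤ S.ncard + (f '' S).ncard := ncard_union_le _ _
    _ ≤ S.ncard + S.ncard := Nat.add_le_add_left (ncard_image_le hfin) _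
    _ = 2 * S.ncard := (two_mul _).symm

end

theorem stmt15_general {V : Type*} [Fintype V] (G : SimpleGraph V)
    (S : Set V) (hS : IsCSDS G S) :
    ∃ S' : Set V, IsDoubleDomSet G S' ∧ S ⊆ S' ∧ S'.ncard ≤ 2 * S.ncard := by
  classical
  exact hS.exists_isDoubleDomSet_superset S.toFinite

theorem stmt15 {V : Type*} [Fintype V] (G : SimpleGraph V)
    (hreg : ∀ v : V, (G.neighborSet v).ncard = 3)
    (S : Set V) (hS : IsCSDS G S)
    (hmin : ∀ S' ⊂ S, ¬ IsCSDS G S') :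
    ∃ S' : Set V, IsDoubleDomSet G S' ∧ S ⊆ S' ∧ S'.ncard ≤ 2 * S.ncard :=
  stmt15_general G S hS
end
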